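/- arXiv:1404.7607 — 4 statements merged into one kernel-verified Lean document; each statement's English description precedes it below -/
import Mathlib

section
/- Let q : (0,∞) → ℝ be C¹, positive, increasing, with q'/q strictly decreasing on (0,∞), and extend q continuously by q(0)=0. Define Q(r) = ∫₀ʳ q(t) dt. Then Q(r) ≤ q(r)²/q'(r) for all r > 0; equivalently (Q/q)'(r) = 1 − Q(r)q'(r)/q(r)² ≥ 0 for all r > 0. -/
open Set Filter MeasureTheory Topology

theorem stmt1 (q q' : ℝ → ℝ)
    (hderiv : ∀ r > 0, HasDerivAt q (q' r) r)
    (hcont : ContinuousOn q' (Ioi 0))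
    (hqpos : ∀ r > 0, 0 < q r) (hq'pos : ∀ r > 0, 0 < q' r)
    (hq0 : q 0 = 0) (hqcont : ContinuousOn q (Ici 0))
    (hanti : StrictAntiOn (fun r => q' r / q r) (Ioi 0))
    (hint : ∀ r > 0, IntervalIntegrable q volume 0 r) :
    ∀ r > 0, (∫ t in (0:ℝ)..r, q t) ≤ (q r) ^ 2 / q' r := by
  intro r hr
  have hq'r := hq'pos r hr
  have hqr := hqpos r hr
  set c := q' r / q r with hc
  have hcpos : 0 < c := div_pos hq'r hqr
  -- q is monotone on Ici 0
  have hmono : MonotoneOn q (Ici 0) := by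
    apply (strictMonoOn_of_hasDerivWithinAt_pos (convex_Ici 0) hqcont
      (f' := q') ?_ ?_).monotoneOn
    · intro x hx
      rw [interior_Ici] at hx
      exact (hderiv x hx).hasDerivWithinAt
    · intro x hx
      rw [interior_Ici] at hx
      exact hq'pos x hx
  have hqnn : ∀ t, 0 ≤ t → 0 ≤ q t := by
    intro t ht
    rcases ht.eq_or_lt with h | h
    · rw [← h, hq0]
    · exact (hqpos t h).le
  -- key estimate for each ε in (0, r)
  have key : ∀ ε ∈ Ioo (0:ℝ) r,
      c * ∫ t in (0:ℝ)..r, q t ≤ c * (∫ t in (0:ℝ)..ε, q t) + (q r - q ε) := by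
    intro ε hε
    have hε0 := hε.1
    have hεr := hε.2
    have hsub : Icc ε r ⊆ Ioi 0 := fun x hx => lt_of_lt_of_le hε0 hx.1
    have hintq : IntervalIntegrable q volume ε r :=
      ((hqcont.mono (fun x hx => le_trans hε0.le hx.1 : Icc ε r ⊆ Ici 0)).intervalIntegrable_of_Icc hεr.le)
    have hintq' : IntervalIntegrable q' volume ε r :=
      (hcont.mono hsub).intervalIntegrable_of_Icc hεr.le
    have hintcq : IntervalIntegrable (fun t => c * q t) volume ε r :=
      hintq.const_mul c
    have hftc : ∫ t in ε..r, q' t = q r - q ε := by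
      apply intervalIntegral.integral_eq_sub_of_hasDerivAt
      · intro x hx
        rw [uIcc_of_le hεr.le] at hx
        exact hderiv x (hsub hx)
      · exact hintq'
    have hmono2 : ∫ t in ε..r, c * q t ≤ ∫ t in ε..r, q' t := by
      apply intervalIntegral.integral_mono_on hεr.le hintcq hintq'
      intro x hx
      rcases eq_or_lt_of_le hx.2 with h | h
      · subst h
        rw [hc, div_mul_cancel₀ _ hqr.ne']
      · have hx0 : (0:ℝ) < x := lt_of_lt_of_le hε0 hx.1
        have hlt : q' r / q r < q' x / q x := hanti (mem_Ioi.2 hx0) (mem_Ioi.2 hr) h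
        have := (lt_div_iff₀ (hqpos x hx0)).mp hlt
        linarith [this]
    have hsplit : (∫ t in (0:ℝ)..ε, q t) + ∫ t in ε..r, q t = ∫ t in (0:ℝ)..r, q t := by
      apply intervalIntegral.integral_add_adjacent_intervals (hint ε hε0) hintq
    have hcq : c * ∫ t in ε..r, q t = ∫ t in ε..r, c * q t := by
      rw [intervalIntegral.integral_const_mul]
    calc c * ∫ t in (0:ℝ)..r, q t
        = c * (∫ t in (0:ℝ)..ε, q t) + c * ∫ t in ε..r, q t := by
          rw [← hsplit]; ring
      _ ≤ c * (∫ t in (0:ℝ)..ε, q t) + (q r - q ε) := by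
          rw [hcq]
          have := hmono2.trans_eq hftc
          linarith
  -- limits
  have hqtend : Tendsto q (𝓝[>] (0:ℝ)) (𝓝 0) := by
    have := (hqcont 0 (self_mem_Ici)).tendsto
    rw [hq0] at this
    exact this.mono_left (nhdsWithin_mono 0 Ioi_subset_Ici_self)
  have hIntTend : Tendsto (fun ε => ∫ t in (0:ℝ)..ε, q t) (𝓝[>] (0:ℝ)) (𝓝 0) := by
    apply squeeze_zero'
    · filter_upwards [self_mem_nhdsWithin] with ε hε
      apply intervalIntegral.integral_nonneg (le_of_lt hε)
      intro u hu; exact hqnn u hu.1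
    · filter_upwards [self_mem_nhdsWithin, Ioo_mem_nhdsGT_of_mem ⟨le_refl (0:ℝ), hr⟩] with ε hε hε'
      have hintε := hint ε hε
      have : ∫ t in (0:ℝ)..ε, q t ≤ ∫ t in (0:ℝ)..ε, q r := by
        apply intervalIntegral.integral_mono_on (le_of_lt hε) hintε
          (intervalIntegrable_const)
        intro x hx
        exact hmono (mem_Ici.2 hx.1) (mem_Ici.2 hr.le) (hx.2.trans hε'.2.le)
      simpa using this
    · have : Tendsto (fun ε : ℝ => ε * q r) (𝓝[>] (0:ℝ)) (𝓝 (0 * q r)) :=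
        (tendsto_id.mono_left nhdsWithin_le_nhds).mul_const (q r)
      simpa using this
  have hlim : Tendsto (fun ε => c * (∫ t in (0:ℝ)..ε, q t) + (q r - q ε))
      (𝓝[>] (0:ℝ)) (𝓝 (c * 0 + (q r - 0))) :=
    ((hIntTend.const_mul c).add (tendsto_const_nhds.sub hqtend))
  have hfinal : c * ∫ t in (0:ℝ)..r, q t ≤ q r := by
    have h := ge_of_tendsto (b := c * ∫ t in (0:ℝ)..r, q t) hlim ?_
    · simpa using h
    · filter_upwards [Ioo_mem_nhdsGT_of_mem ⟨le_refl (0:ℝ), hr⟩] with ε hε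
      exact key ε hε
  rw [le_div_iff₀ hq'r]
  rw [hc] at hfinal
  have h2 : q' r * (∫ t in (0:ℝ)..r, q t) ≤ q r * q r := by
    rw [div_mul_eq_mul_div] at hfinal
    calc q' r * (∫ t in (0:ℝ)..r, q t) = q' r * (∫ t in (0:ℝ)..r, q t) := rfl
      _ ≤ q r * q r := by
        have := (div_le_iff₀ hqr).mp hfinal
        linarith
  nlinarith [h2]
end

section
/- Let q : (0,∞) → ℝ be C¹ and positive with q' > 0 on (0,∞), such that the limit L := lim_{r→0⁺} r·q'(r)/q(r) exists and is positive, and suppose Q(r) = ∫₀ʳ q(t) dt is finite for all r. Then lim_{r→0⁺} (Q/q)'(r) exists and equals 1/(L + 1). -/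
/-!
Write `Q r = ∫₀ʳ q`. Then `Q q' / q² = (Q / (r q)) · (r q' / q)`, and the second factor tends to `L`.
For the first, both `Q` and `r q` vanish at `0⁺` (the latter because `q` is increasing and positive),
so by L'Hôpital its limit is that of `q / (q + r q') = 1 / (1 + r q' / q)`, namely `1 / (L + 1)`.
Hence `(Q/q)' = 1 - Q q' / q² → 1 - L / (L + 1) = 1 / (L + 1)`.
-/

open Set Filter MeasureTheory Topology

theorem tendsto_intervalIntegral_zero_nhdsGT_zero {f : ℝ → ℝ} {b : ℝ} (hb : 0 < b)
    (hf : IntervalIntegrable f volume 0 b) :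
    Tendsto (fun r => ∫ t in (0:ℝ)..r, f t) (𝓝[>] 0) (𝓝 0) := by
  have hcont : ContinuousWithinAt (fun r => ∫ t in (0:ℝ)..r, f t) (Ioc 0 b) 0 :=
    ((intervalIntegral.continuousOn_primitive_interval' hf left_mem_uIcc) 0
      left_mem_uIcc).mono (by rw [uIcc_of_le hb.le]; exact Ioc_subset_Icc_self)
  simpa [nhdsWithin_Ioc_eq_nhdsGT hb] using hcont.tendsto

theorem tendsto_mul_self_nhdsGT_zero_of_monotoneOn {q : ℝ → ℝ} (hmono : MonotoneOn q (Ioi 0))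
    (hnonneg : ∀ r > 0, 0 ≤ q r) :
    Tendsto (fun r => r * q r) (𝓝[>] 0) (𝓝 0) := by
  have hbound : Tendsto (fun r : ℝ => r * q 1) (𝓝[>] 0) (𝓝 0) := by
    simpa using ((continuous_mul_const (q 1)).tendsto 0).mono_left nhdsWithin_le_nhds
  have hIoo : Ioo (0:ℝ) 1 ∈ 𝓝[>] 0 := Ioo_mem_nhdsGT one_pos
  refine squeeze_zero' ?_ ?_ hbound
  · filter_upwards [hIoo] with r hr
    exact mul_nonneg hr.1.le (hnonneg r hr.1)
  · filter_upwards [hIoo] with r hr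
    exact mul_le_mul_of_nonneg_left (hmono hr.1 (mem_Ioi.2 one_pos) hr.2.le) hr.1.le

section

variable {q q' : ℝ → ℝ} (hderiv : ∀ r > 0, HasDerivAt q (q' r) r)
  (hqpos : ∀ r > 0, 0 < q r) (hq'pos : ∀ r > 0, 0 < q' r)
include hderiv hq'pos

theorem monotoneOn_Ioi_of_hasDerivAt_pos : MonotoneOn q (Ioi 0) := by
  refine monotoneOn_of_hasDerivWithinAt_nonneg (f' := q') (convex_Ioi 0)
    (fun r hr => (hderiv r hr).continuousAt.continuousWithinAt) ?_ ?_
  · rw [interior_Ioi]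
    exact fun r hr => (hderiv r hr).hasDerivWithinAt
  · rw [interior_Ioi]
    exact fun r hr => (hq'pos r hr).le

include hqpos

theorem tendsto_intervalIntegral_div_mul_self {L : ℝ} (hL : L + 1 ≠ 0)
    (hlim : Tendsto (fun r => r * q' r / q r) (𝓝[>] 0) (𝓝 L))
    (hint : ∀ r > 0, IntervalIntegrable q volume 0 r) :
    Tendsto (fun r => (∫ t in (0:ℝ)..r, q t) / (r * q r)) (𝓝[>] 0) (𝓝 (1 / (L + 1))) := by
  have hqcont : ContinuousOn q (Ioi 0) := fun r hr =>
    (hderiv r hr).continuousAt.continuousWithinAt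
  have hratio : Tendsto (fun r => q r / (q r + r * q' r)) (𝓝[>] 0) (𝓝 (1 / (L + 1))) := by
    have h := (tendsto_const_nhds (x := (1:ℝ))).div (hlim.add tendsto_const_nhds) hL
    refine h.congr' ?_
    filter_upwards [self_mem_nhdsWithin] with r hr
    have hq := (hqpos r hr).ne'
    simp only [Pi.div_apply]
    field_simp
    ring
  refine HasDerivAt.lhopital_zero_right_on_Ioo one_pos (fun r hr => ?_) (fun r hr => ?_)
    (fun r hr => ?_) (tendsto_intervalIntegral_zero_nhdsGT_zero one_pos (hint 1 one_pos))
    (tendsto_mul_self_nhdsGT_zero_of_monotoneOn (monotoneOn_Ioi_of_hasDerivAt_pos hderiv hq'pos)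
      fun r hr => (hqpos r hr).le) hratio
  · exact intervalIntegral.integral_hasDerivAt_right (hint r hr.1)
      (hqcont.stronglyMeasurableAtFilter isOpen_Ioi r hr.1) (hqcont.continuousAt (Ioi_mem_nhds hr.1))
  · have h : HasDerivAt (fun y => y * q y) (1 * q r + r * q' r) r :=
      (hasDerivAt_id' r).mul (hderiv r hr.1)
    simpa using h
  · exact (add_pos (hqpos r hr.1) (mul_pos hr.1 (hq'pos r hr.1))).ne'

end

theorem stmt3_general (q q' : ℝ → ℝ) (L : ℝ) (hL : 0 < L)
    (hderiv : ∀ r > 0, HasDerivAt q (q' r) r)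
    (hqpos : ∀ r > 0, 0 < q r) (hq'pos : ∀ r > 0, 0 < q' r)
    (hlim : Tendsto (fun r => r * q' r / q r) (nhdsWithin 0 (Ioi 0)) (nhds L))
    (hint : ∀ r > 0, IntervalIntegrable q volume 0 r) :
    Tendsto (fun r => 1 - (∫ t in (0:ℝ)..r, q t) * q' r / (q r) ^ 2)
      (nhdsWithin 0 (Ioi 0)) (nhds (1 / (L + 1))) := by
  have hL1 : L + 1 ≠ 0 := by positivity
  have hprod := (tendsto_intervalIntegral_div_mul_self hderiv hqpos hq'pos hL1 hlim hint).mul hlim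
  have hlimit : 1 - 1 / (L + 1) * L = 1 / (L + 1) := by field_simp; ring
  rw [← hlimit]
  refine (tendsto_const_nhds.sub hprod).congr' ?_
  filter_upwards [self_mem_nhdsWithin] with r hr
  have hq := (hqpos r hr).ne'
  have hr0 : r ≠ 0 := ne_of_gt hr
  field_simp

theorem stmt3 (q q' : ℝ → ℝ) (L : ℝ) (hL : 0 < L)
    (hderiv : ∀ r > 0, HasDerivAt q (q' r) r)
    (hcont : ContinuousOn q' (Ioi 0))
    (hqpos : ∀ r > 0, 0 < q r) (hq'pos : ∀ r > 0, 0 < q' r)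
    (hlim : Tendsto (fun r => r * q' r / q r) (nhdsWithin 0 (Ioi 0)) (nhds L))
    (hint : ∀ r > 0, IntervalIntegrable q volume 0 r) :
    Tendsto (fun r => 1 - (∫ t in (0:ℝ)..r, q t) * q' r / (q r) ^ 2)
      (nhdsWithin 0 (Ioi 0)) (nhds (1 / (L + 1))) :=
  stmt3_general q q' L hL hderiv hqpos hq'pos hlim hint
end

section
/- Let p > 1 and define h(r) := q(r)^{p'} where 1/p + 1/p' = 1. For a solution v of (q·φ_p(v'))' + q·f(v) = 0 with energy E(r) = |v'(r)|^p/p' + F(v(r)), the function H(r) := h(r)·E(r) satisfies H'(r) = h'(r)·F(v(r)) for all r > 0. In particular, H is nonincreasing whenever F(v(r)) ≤ 0. -/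
/-!
Differentiate `H = q^{p'} E` by the product rule. The dissipation `E' = -(q'/q)|v'|^p` contributes
`-q^{p'-1} q' |v'|^p`, which exactly cancels the kinetic part `p' q^{p'-1} q' |v'|^p / p'` of the
derivative of the weight, leaving `H' = p' q^{p'-1} q' F(v)`. As `p' > 0` and `q, q' > 0`, this is
nonpositive where `F(v) ≤ 0`, so `H` is antitone there by the mean value theorem.
-/

open Set

theorem HasDerivAt.rpow_const_mul_energy {q E : ℝ → ℝ} {q' p' A B r : ℝ}
    (hq : HasDerivAt q q' r) (hqr : q r ≠ 0) (hp' : p' ≠ 0)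
    (hE : HasDerivAt E (-(q' / q r) * A) r) (hEr : E r = A / p' + B) :
    HasDerivAt (fun r => q r ^ p' * E r) (p' * q r ^ (p' - 1) * q' * B) r := by
  refine ((hq.rpow_const (Or.inl hqr)).mul hE).congr_deriv ?_
  rw [hEr, Real.rpow_sub_one hqr]
  field_simp
  ring

theorem stmt6_general (p p' : ℝ) (hp : 1 < p) (hp' : 1 / p + 1 / p' = 1)
    (F : ℝ → ℝ)
    (q q' : ℝ → ℝ) (hderiv : ∀ r > 0, HasDerivAt q (q' r) r)
    (hqpos : ∀ r > 0, 0 < q r) (hq'pos : ∀ r > 0, 0 < q' r)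
    (v v' : ℝ → ℝ)
    (E : ℝ → ℝ) (hE : ∀ r, E r = |v' r| ^ p / p' + F (v r))
    (hE' : ∀ r > 0, HasDerivAt E (-(q' r / q r) * |v' r| ^ p) r) :
    (∀ r > 0, HasDerivAt (fun r => q r ^ p' * E r)
        (p' * q r ^ (p' - 1) * q' r * F (v r)) r) ∧
    (∀ a b : ℝ, 0 < a → a ≤ b → (∀ r ∈ Icc a b, F (v r) ≤ 0) →
        q b ^ p' * E b ≤ q a ^ p' * E a) := by
  have hp'pos : 0 < p' :=
    (Real.holderConjugate_iff.mpr ⟨hp, by simpa only [one_div] using hp'⟩).symm.pos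
  have hH : ∀ r > 0, HasDerivAt (fun r => q r ^ p' * E r)
      (p' * q r ^ (p' - 1) * q' r * F (v r)) r := fun r hr =>
    (hderiv r hr).rpow_const_mul_energy (hqpos r hr).ne' hp'pos.ne' (hE' r hr) (hE r)
  refine ⟨hH, fun a b ha hab hFv => ?_⟩
  have hpos : ∀ r ∈ Icc a b, 0 < r := fun r hr => ha.trans_le hr.1
  refine antitoneOn_of_hasDerivWithinAt_nonpos (convex_Icc a b)
    (fun r hr => (hH r (hpos r hr)).continuousAt.continuousWithinAt)
    (fun r hr => (hH r (hpos r (interior_subset hr))).hasDerivWithinAt)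
    (fun r hr => ?_) (left_mem_Icc.mpr hab) (right_mem_Icc.mpr hab) hab
  have hr' := interior_subset hr
  have hq := (hqpos r (hpos r hr')).le
  have hq' := (hq'pos r (hpos r hr')).le
  exact mul_nonpos_of_nonneg_of_nonpos (by positivity) (hFv r hr')

theorem stmt6 (p p' : ℝ) (hp : 1 < p) (hp' : 1 / p + 1 / p' = 1)
    (f F : ℝ → ℝ) (hF : ∀ s, F s = ∫ t in (0:ℝ)..s, f t)
    (q q' : ℝ → ℝ) (hderiv : ∀ r > 0, HasDerivAt q (q' r) r)
    (hqpos : ∀ r > 0, 0 < q r) (hq'pos : ∀ r > 0, 0 < q' r)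
    (v v' : ℝ → ℝ) (hv : ∀ r, HasDerivAt v (v' r) r)
    (E : ℝ → ℝ) (hE : ∀ r, E r = |v' r| ^ p / p' + F (v r))
    (hE' : ∀ r > 0, HasDerivAt E (-(q' r / q r) * |v' r| ^ p) r) :
    (∀ r > 0, HasDerivAt (fun r => q r ^ p' * E r)
        (p' * q r ^ (p' - 1) * q' r * F (v r)) r) ∧
    (∀ a b : ℝ, 0 < a → a ≤ b → (∀ r ∈ Icc a b, F (v r) ≤ 0) →
        q b ^ p' * E b ≤ q a ^ p' * E a) :=
  stmt6_general p p' hp hp' F q q' hderiv hqpos hq'pos v v' E hE hE'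
end

section
/- Let p > 1, let a, b : (0,∞) → (0,∞) be C¹ weights, χ(r) = ∫₀ʳ (b/a)^{1/p} dt a diffeomorphism of (0,∞), and q := (a∘χ^{-1})^{1/p}·(b∘χ^{-1})^{1/p'}. If u ∈ C¹ solves (a(r)·φ_p(u'(r)))' + b(r)·f(u(r)) = 0 on (0,∞), then v := u∘χ^{-1} solves (q(t)·φ_p(v'(t)))' + q(t)·f(v(t)) = 0 on (0,∞), where φ_p(s) = |s|^{p−2}s and 1/p + 1/p' = 1. -/
open Set Filter Topology

/-!
The inverse `ψ = χ⁻¹` has derivative `(a / b) ^ (1 / p) ∘ ψ`, so `v' = (u' ∘ ψ) · (a / b) ^ (1 / p) ∘ ψ`.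
Since `φ_p` is `(p - 1)`-homogeneous and `q = b · (a / b) ^ (1 / p)` along `ψ`, the new flux
`q · φ_p(v')` is the old flux `a · φ_p(u')` composed with `ψ`. By the chain rule its derivative is
`-(b · f(u)) ∘ ψ · (a / b) ^ (1 / p) ∘ ψ = -q · f(v)`.
-/

noncomputable def phiP (p s : ℝ) : ℝ := |s| ^ (p - 2) * s

lemma phiP_mul_of_pos (p s : ℝ) {c : ℝ} (hc : 0 < c) :
    phiP p (s * c) = c ^ (p - 1) * phiP p s := by
  have hpow : c ^ (p - 2) * c = c ^ (p - 1) := by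
    rw [← Real.rpow_add_one hc.ne']
    congr 1
    ring
  rw [phiP, phiP, abs_mul, abs_of_pos hc, Real.mul_rpow (abs_nonneg s) hc.le, ← hpow]
  ring

section Weights

variable {p p' A B : ℝ}

lemma mul_div_rpow_eq_rpow_mul_rpow (hpp' : 1 / p + 1 / p' = 1) (hA : 0 ≤ A) (hB : 0 < B) :
    B * (A / B) ^ (1 / p) = A ^ (1 / p) * B ^ (1 / p') := by
  rw [Real.div_rpow hA hB.le, show 1 / p' = 1 - 1 / p by linarith, Real.rpow_sub hB,
    Real.rpow_one]
  ring

lemma rpow_mul_rpow_mul_phiP_eq (hp : p ≠ 0) (hpp' : 1 / p + 1 / p' = 1) (hA : 0 < A)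
    (hB : 0 < B) (s : ℝ) :
    A ^ (1 / p) * B ^ (1 / p') * phiP p (s * (A / B) ^ (1 / p)) = A * phiP p s := by
  have hc : 0 < (A / B) ^ (1 / p) := Real.rpow_pos_of_pos (div_pos hA hB) _
  have hcp : ((A / B) ^ (1 / p)) ^ p = A / B := by
    rw [one_div, Real.rpow_inv_rpow (div_pos hA hB).le hp]
  rw [← mul_div_rpow_eq_rpow_mul_rpow hpp' hA.le hB, phiP_mul_of_pos _ _ hc,
    Real.rpow_sub_one hc.ne', hcp]
  field_simp

end Weights

section InverseFunction

variable {α β : Type*} [LinearOrder α] [TopologicalSpace α] [OrderTopology α] [DenselyOrdered α]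
  [LinearOrder β] [TopologicalSpace β] [OrderTopology β]

lemma StrictMonoOn.continuousAt_of_invOn {χ : α → β} {ψ : β → α} {S : Set α} {T : Set β}
    (hχ : StrictMonoOn χ S) (hS : IsOpen S) (hinv : InvOn ψ χ S T) (hχST : MapsTo χ S T)
    (hψTS : MapsTo ψ T S) {t : β} (hT : T ∈ 𝓝 t) (ht : t ∈ T) : ContinuousAt ψ t := by
  have hψ : StrictMonoOn ψ T := fun t₁ h₁ t₂ h₂ hlt =>
    (hχ.lt_iff_lt (hψTS h₁) (hψTS h₂)).1 (by rwa [hinv.2 h₁, hinv.2 h₂])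
  refine hψ.continuousAt_of_image_mem_nhds hT (mem_of_superset (hS.mem_nhds (hψTS ht)) ?_)
  calc S = ψ '' (χ '' S) := hinv.1.image_image.symm
    _ ⊆ ψ '' T := image_mono hχST.image_subset

end InverseFunction

theorem hasDerivAt_of_invOn {χ ψ χ' : ℝ → ℝ} {S T : Set ℝ} (hSc : Convex ℝ S) (hSo : IsOpen S)
    (hTo : IsOpen T) (hχ : ∀ r ∈ S, HasDerivAt χ (χ' r) r) (hχ'pos : ∀ r ∈ S, 0 < χ' r)
    (hinv : InvOn ψ χ S T) (hχST : MapsTo χ S T) (hψTS : MapsTo ψ T S) {t : ℝ} (ht : t ∈ T) :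
    HasDerivAt ψ (χ' (ψ t))⁻¹ t := by
  have hmono : StrictMonoOn χ S :=
    strictMonoOn_of_hasDerivWithinAt_pos hSc (fun r hr => (hχ r hr).continuousAt.continuousWithinAt)
      (fun r hr => (hχ r (interior_subset hr)).hasDerivWithinAt)
      (fun r hr => hχ'pos r (interior_subset hr))
  exact HasDerivAt.of_local_left_inverse
    (hmono.continuousAt_of_invOn hSo hinv hχST hψTS (hTo.mem_nhds ht) ht)
    (hχ _ (hψTS ht)) (hχ'pos _ (hψTS ht)).ne'
    (eventually_of_mem (hTo.mem_nhds ht) fun s hs => hinv.2 hs)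

theorem stmt15_general (p p' : ℝ) (hp : 1 < p) (hp' : 1 / p + 1 / p' = 1)
    (a b : ℝ → ℝ) (hapos : ∀ r > (0:ℝ), 0 < a r) (hbpos : ∀ r > (0:ℝ), 0 < b r)
    (f : ℝ → ℝ)
    (χ ψ : ℝ → ℝ)
    (hχψ : ∀ t > (0:ℝ), 0 < ψ t ∧ χ (ψ t) = t)
    (hψχ : ∀ r > (0:ℝ), ψ (χ r) = r ∧ 0 < χ r)
    (hχ' : ∀ r > (0:ℝ), HasDerivAt χ ((b r / a r) ^ (1 / p)) r)
    (q : ℝ → ℝ) (hq : ∀ t > (0:ℝ), q t = (a (ψ t)) ^ (1 / p) * (b (ψ t)) ^ (1 / p'))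
    (u u' : ℝ → ℝ) (hu : ∀ r > (0:ℝ), HasDerivAt u (u' r) r)
    (hueq : ∀ r > (0:ℝ),
      HasDerivAt (fun r => a r * (|u' r| ^ (p - 2) * u' r)) (-(b r * f (u r))) r)
    (v : ℝ → ℝ) (hv : ∀ t, v t = u (ψ t)) :
    ∀ t > (0:ℝ),
      HasDerivAt (fun t => q t * (|deriv v t| ^ (p - 2) * deriv v t))
        (-(q t * f (v t))) t := by
  have hψ' : ∀ t > 0, HasDerivAt ψ ((a (ψ t) / b (ψ t)) ^ (1 / p)) t := by
    intro t ht
    have hψt := (hχψ t ht).1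
    rw [← inv_div, Real.inv_rpow (div_pos (hbpos _ hψt) (hapos _ hψt)).le]
    exact hasDerivAt_of_invOn (convex_Ioi 0) isOpen_Ioi isOpen_Ioi hχ'
      (fun r hr => Real.rpow_pos_of_pos (div_pos (hbpos r hr) (hapos r hr)) _)
      ⟨fun r hr => (hψχ r hr).1, fun t ht => (hχψ t ht).2⟩ (fun r hr => (hψχ r hr).2)
      (fun t ht => (hχψ t ht).1) ht
  have hflux : ∀ t > 0, q t * phiP p (deriv v t) = a (ψ t) * phiP p (u' (ψ t)) := by
    intro t ht
    have hψt := (hχψ t ht).1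
    have hv' : HasDerivAt v (u' (ψ t) * (a (ψ t) / b (ψ t)) ^ (1 / p)) t := by
      rw [show v = fun t => u (ψ t) from funext hv]
      exact (hu _ hψt).comp t (hψ' t ht)
    rw [hv'.deriv, hq t ht]
    exact rpow_mul_rpow_mul_phiP_eq (zero_lt_one.trans hp).ne' hp' (hapos _ hψt) (hbpos _ hψt) _
  intro t ht
  have hψt := (hχψ t ht).1
  have hsource : -(b (ψ t) * f (u (ψ t))) * (a (ψ t) / b (ψ t)) ^ (1 / p) = -(q t * f (v t)) := by
    rw [hv, hq t ht, ← mul_div_rpow_eq_rpow_mul_rpow hp' (hapos _ hψt).le (hbpos _ hψt)]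
    ring
  exact hsource ▸ ((hueq _ hψt).comp t (hψ' t ht)).congr_of_eventuallyEq
    (eventually_of_mem (Ioi_mem_nhds ht) hflux)

theorem stmt15 (p p' : ℝ) (hp : 1 < p) (hp' : 1 / p + 1 / p' = 1)
    (a b : ℝ → ℝ) (hapos : ∀ r > (0:ℝ), 0 < a r) (hbpos : ∀ r > (0:ℝ), 0 < b r)
    (f : ℝ → ℝ) (hf : Continuous f)
    (χ ψ : ℝ → ℝ)
    (hχψ : ∀ t > (0:ℝ), 0 < ψ t ∧ χ (ψ t) = t)
    (hψχ : ∀ r > (0:ℝ), ψ (χ r) = r ∧ 0 < χ r)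
    (hχ' : ∀ r > (0:ℝ), HasDerivAt χ ((b r / a r) ^ (1 / p)) r)
    (q : ℝ → ℝ) (hq : ∀ t > (0:ℝ), q t = (a (ψ t)) ^ (1 / p) * (b (ψ t)) ^ (1 / p'))
    (u u' : ℝ → ℝ) (hu : ∀ r > (0:ℝ), HasDerivAt u (u' r) r)
    (hueq : ∀ r > (0:ℝ),
      HasDerivAt (fun r => a r * (|u' r| ^ (p - 2) * u' r)) (-(b r * f (u r))) r)
    (v : ℝ → ℝ) (hv : ∀ t, v t = u (ψ t)) :
    ∀ t > (0:ℝ),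
      HasDerivAt (fun t => q t * (|deriv v t| ^ (p - 2) * deriv v t))
        (-(q t * f (v t))) t :=
  stmt15_general p p' hp hp' a b hapos hbpos f χ ψ hχψ hψχ hχ' q hq u u' hu hueq v hv
end
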